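/- arXiv:2101.06627 — 2 statements merged into one kernel-verified Lean document; each statement's English description precedes it below -/
import Mathlib

section
/- Let λ > 0, ν > 0 and Δt > 0. On a probability space, let N be a random variable with the Poisson distribution of parameter λΔt, and let (U_i)_{i≥1} be a sequence of i.i.d. random variables uniformly distributed on [0, Δt], independent of N. Define the random variable C by C = 1 + νΔt if N = 0, and C = 1 + νΔt + 2N + ν(NΔt − Σ_{i=1}^{N} U_i + max_{1≤i≤N} U_i) if N ≥ 1. Then E[C] = 1 + νΔt + (2λ + ν)Δt + (λν/2)Δt² + (ν/λ)(e^{−λΔt} − 1). -/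
open MeasureTheory ProbabilityTheory
open scoped ENNReal NNReal

/-!
Write `c_n(u)` for the cost when `n` spikes arrive at times `u 1, …, u n`. Since `N` is
independent of `U`, the law of `(N, U)` is a product measure, so `E[C] = Σₙ P(N = n) E[c_n(U)]`.
By linearity `E[c_n(U)]` only needs `E[U_i] = Δt/2` and the mean of the maximum of `n` i.i.d.
uniforms: `P(max < t) = (t/Δt)ⁿ`, so the layer-cake formula gives `E[max] = nΔt/(n+1)`.
Hence `E[c_n(U)] = 1 + νΔt + 2n + ν(nΔt/2 + nΔt/(n+1))`, and the Poisson sums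
`Σ pₙ n = λΔt` and `Σ pₙ/(n+1) = (1 - e^{-λΔt})/(λΔt)` finish the computation.
-/

namespace MeasureTheory.pdf.IsUniform

variable {Ω : Type*} [MeasurableSpace Ω] {P : Measure Ω}

lemma ae_mem {E : Type*} [MeasurableSpace E] {μ : Measure E} {X : Ω → E} {s : Set E}
    (hms : MeasurableSet s) (hns : μ s ≠ 0) (hnt : μ s ≠ ∞) (hu : IsUniform X s P μ) :
    ∀ᵐ ω ∂P, X ω ∈ s :=
  ae_of_ae_map (hu.aemeasurable hns hnt) (hu ▸ ae_cond_mem hms)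

variable {X : Ω → ℝ} {a : ℝ}

lemma aemeasurable_Icc (ha : 0 < a) (hX : IsUniform X (Set.Icc 0 a) P) : AEMeasurable X P :=
  hX.aemeasurable (by simp [ha]) (by simp)

lemma ae_mem_Icc (ha : 0 < a) (hX : IsUniform X (Set.Icc 0 a) P) :
    ∀ᵐ ω ∂P, X ω ∈ Set.Icc 0 a :=
  hX.ae_mem measurableSet_Icc (by simp [ha]) (by simp)

lemma integral_eq_half (ha : 0 < a) (hX : IsUniform X (Set.Icc 0 a) P) :
    ∫ ω, X ω ∂P = a / 2 := by
  rw [hX.integral_eq, Real.volume_Icc, integral_Icc_eq_integral_Ioc,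
    ← intervalIntegral.integral_of_le ha.le, integral_id, ENNReal.toReal_inv,
    ENNReal.toReal_ofReal (by linarith)]
  norm_num
  field_simp

lemma measure_preimage_Iio (ha : 0 < a) (hX : IsUniform X (Set.Icc 0 a) P) {t : ℝ}
    (ht : t ∈ Set.Icc 0 a) : P (X ⁻¹' Set.Iio t) = ENNReal.ofReal (t / a) := by
  have hIco : Set.Icc 0 a ∩ Set.Iio t = Set.Ico 0 t := by
    ext
    simp only [Set.mem_inter_iff, Set.mem_Icc, Set.mem_Iio, Set.mem_Ico]
    grind
  rw [hX.measure_preimage (by simp [ha]) (by simp) measurableSet_Iio, hIco, Real.volume_Ico,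
    Real.volume_Icc, ← ENNReal.ofReal_div_of_pos (by linarith), sub_zero, sub_zero]

lemma integrable_Icc [IsFiniteMeasure P] (ha : 0 < a) (hX : IsUniform X (Set.Icc 0 a) P) :
    Integrable X P :=
  .of_mem_Icc 0 a (hX.aemeasurable_Icc ha) (hX.ae_mem_Icc ha)

end MeasureTheory.pdf.IsUniform

open MeasureTheory.pdf

section OrderStatistics

variable {Ω ι : Type*} [MeasurableSpace Ω] {P : Measure Ω} {U : ι → Ω → ℝ} {a : ℝ}
  {s : Finset ι}

lemma Finset.integrable_sup'_apply (hs : s.Nonempty) (hU : ∀ i ∈ s, Integrable (U i) P) :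
    Integrable (fun ω => s.sup' hs (U · ω)) P := by
  have h : (fun ω => s.sup' hs (U · ω)) = s.sup' hs U := by ext ω; simp [Finset.sup'_apply]
  exact h ▸ Finset.sup'_induction (p := (Integrable · P)) hs U (fun _ hf _ hg => hf.sup hg) hU

variable [IsProbabilityMeasure P]

lemma measureReal_le_sup'_of_isUniform (ha : 0 < a) (hU : ∀ i, IsUniform (U i) (Set.Icc 0 a) P)
    (hind : iIndepFun U P) (hs : s.Nonempty) {t : ℝ} (ht : t ∈ Set.Icc 0 a) :
    P.real {ω | t ≤ s.sup' hs (U · ω)} = 1 - (t / a) ^ s.card := by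
  have hcompl : {ω | t ≤ s.sup' hs (U · ω)} = (⋂ i ∈ s, U i ⁻¹' Set.Iio t)ᶜ := by
    ext ω
    simp [Finset.le_sup'_iff]
  have hmeas : NullMeasurableSet (⋂ i ∈ s, U i ⁻¹' Set.Iio t) P :=
    .biInter s.countable_toSet fun i _ =>
      (hU i).aemeasurable_Icc ha |>.nullMeasurable measurableSet_Iio
  rw [hcompl, probReal_compl_eq_one_sub₀ hmeas, measureReal_def,
    hind.meas_biInter fun i _ => ⟨Set.Iio t, measurableSet_Iio, rfl⟩, ENNReal.toReal_prod,
    Finset.prod_congr rfl fun i _ => by rw [(hU i).measure_preimage_Iio ha ht],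
    Finset.prod_const, ENNReal.toReal_ofReal (div_nonneg ht.1 ha.le)]

lemma integral_sup'_of_isUniform (ha : 0 < a) (hU : ∀ i, IsUniform (U i) (Set.Icc 0 a) P)
    (hind : iIndepFun U P) (hs : s.Nonempty) :
    ∫ ω, s.sup' hs (U · ω) ∂P = a * s.card / (s.card + 1) := by
  have ⟨j, hj⟩ := hs
  have hmem : ∀ᵐ ω ∂P, ∀ i ∈ s, U i ω ∈ Set.Icc 0 a :=
    Filter.eventually_all_finset s |>.2 fun i _ => (hU i).ae_mem_Icc ha
  have hbounds : ∀ᵐ ω ∂P, s.sup' hs (U · ω) ∈ Set.Icc 0 a := by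
    filter_upwards [hmem] with ω hω
    exact ⟨Finset.le_sup'_of_le _ hj (hω j hj).1, Finset.sup'_le _ _ fun i hi => (hω i hi).2⟩
  have hint := Finset.integrable_sup'_apply hs fun i _ => (hU i).integrable_Icc ha
  have hcont : Continuous fun t => (t / a) ^ s.card := by fun_prop
  rw [hint.integral_eq_integral_Ioc_meas_le (hbounds.mono fun _ h => h.1)
      (hbounds.mono fun _ h => h.2),
    setIntegral_congr_fun measurableSet_Ioc fun t ht =>
      measureReal_le_sup'_of_isUniform ha hU hind _ (Set.Ioc_subset_Icc_self ht),
    ← intervalIntegral.integral_of_le ha.le,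
    intervalIntegral.integral_sub intervalIntegrable_const (hcont.intervalIntegrable 0 a)]
  simp only [div_pow, intervalIntegral.integral_div, integral_pow, intervalIntegral.integral_const]
  field_simp
  ring

end OrderStatistics

section Independence

variable {Ω α β : Type*} [MeasurableSpace Ω] [MeasurableSpace α] [Countable α]
  [MeasurableSingletonClass α] [MeasurableSpace β]
  {P : Measure Ω} [IsFiniteMeasure P] {N : Ω → α} {X : Ω → β}

theorem ProbabilityTheory.IndepFun.integral_comp_eq_integral_integral (hNX : IndepFun N X P)
    (hN : AEMeasurable N P) (hX : AEMeasurable X P) {F : α → β → ℝ}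
    (hF : ∀ n, Measurable (F n)) (hint : Integrable (fun ω => F (N ω) (X ω)) P) :
    ∫ ω, F (N ω) (X ω) ∂P = ∫ n, ∫ ω, F n (X ω) ∂P ∂(P.map N) := by
  have hF' : Measurable (Function.uncurry F) := measurable_from_prod_countable_right hF
  have hmap := (indepFun_iff_map_prod_eq_prod_map_map hN hX).1 hNX
  have hprod : Integrable (Function.uncurry F) ((P.map N).prod (P.map X)) := by
    rw [← hmap, integrable_map_measure hF'.aestronglyMeasurable (hN.prodMk hX)]
    exact hint
  calc ∫ ω, F (N ω) (X ω) ∂P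
      = ∫ z, Function.uncurry F z ∂((P.map N).prod (P.map X)) := by
        rw [← hmap, integral_map (hN.prodMk hX) hF'.aestronglyMeasurable]
        rfl
    _ = ∫ n, ∫ ω, F n (X ω) ∂P ∂(P.map N) := by
        rw [integral_prod _ hprod]
        exact integral_congr_ae (.of_forall fun n =>
          integral_map hX (hF n).aestronglyMeasurable)

end Independence

section Poisson

open Real Nat

variable (r : ℝ≥0)

lemma hasSum_mul_cast_poissonMeasure :
    HasSum (fun n : ℕ => exp (-r) * r ^ n / n ! * n) r := by
  have hshift : (fun n : ℕ => exp (-r) * r ^ (n + 1) / (n + 1)! * ↑(n + 1))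
      = fun n => r * (exp (-r) * r ^ n / n !) := by
    ext n
    rw [factorial_succ]
    push_cast
    field_simp
    ring
  have h := (hasSum_one_poissonMeasure r).mul_left (r : ℝ)
  rw [mul_one, ← hshift] at h
  simpa using (hasSum_nat_add_iff (f := fun n : ℕ => exp (-r) * r ^ n / n ! * n) 1).1 h

lemma hasSum_div_succ_poissonMeasure (hr : r ≠ 0) :
    HasSum (fun n : ℕ => exp (-r) * r ^ n / n ! / (n + 1)) ((1 - exp (-r)) / r) := by
  have hshift : (fun n : ℕ => exp (-r) * r ^ (n + 1) / (n + 1)! / r)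
      = fun n : ℕ => exp (-r) * r ^ n / n ! / (n + 1) := by
    ext n
    rw [factorial_succ]
    push_cast
    field_simp
    ring
  have h := (hasSum_nat_add_iff' 1).2 (hasSum_one_poissonMeasure r)
  simp only [Finset.sum_range_one, pow_zero, factorial_zero, cast_one, mul_one, div_one] at h
  rw [← hshift]
  exact h.div_const r

lemma integrable_natCast_of_map_eq_poissonMeasure {Ω : Type*} [MeasurableSpace Ω]
    {P : Measure Ω} {N : Ω → ℕ} {r : ℝ≥0} (hN : P.map N = poissonMeasure r) :
    Integrable (fun ω => (N ω : ℝ)) P := by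
  have hNm : AEMeasurable N P := .of_map_ne_zero (hN ▸ IsProbabilityMeasure.ne_zero _)
  have h : Integrable (fun n : ℕ => (n : ℝ)) (P.map N) := by
    rw [hN, integrable_poissonMeasure_iff]
    simpa using (hasSum_mul_cast_poissonMeasure r).summable
  exact (integrable_map_measure .of_discrete hNm).1 h

end Poisson

section CallNumber

variable (ν Δt : ℝ)

noncomputable def callNumber (n : ℕ) (u : ℕ → ℝ) : ℝ :=
  if hn : n = 0 then 1 + ν * Δt
  else 1 + ν * Δt + 2 * (n : ℝ)
    + ν * ((n : ℝ) * Δt - (∑ i ∈ Finset.Icc 1 n, u i)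
        + (Finset.Icc 1 n).sup' (Finset.nonempty_Icc.mpr (Nat.one_le_iff_ne_zero.mpr hn)) u)

lemma measurable_callNumber (n : ℕ) : Measurable (callNumber ν Δt n) := by
  unfold callNumber
  split_ifs with hn
  · exact measurable_const
  · have hne := Finset.nonempty_Icc.mpr (Nat.one_le_iff_ne_zero.mpr hn)
    have hsup : Measurable fun u : ℕ → ℝ => (Finset.Icc 1 n).sup' hne u := by
      have h : (fun u : ℕ → ℝ => (Finset.Icc 1 n).sup' hne u)
          = (Finset.Icc 1 n).sup' hne fun i (u : ℕ → ℝ) => u i := by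
        ext u; rw [Finset.sup'_apply]
      exact h ▸ Finset.measurable_sup' hne fun i _ => measurable_pi_apply i
    fun_prop

noncomputable def expectedCallNumber (n : ℕ) : ℝ :=
  1 + ν * Δt + 2 * n + ν * (n * Δt / 2 + n * Δt / (n + 1))

variable {ν Δt}

lemma abs_callNumber_le {n : ℕ} {u : ℕ → ℝ} (hu : ∀ i, u i ∈ Set.Icc 0 Δt) :
    |callNumber ν Δt n u| ≤ 1 + 2 * |ν| * Δt + (2 + |ν| * Δt) * n := by
  have hΔt : 0 ≤ Δt := (hu 0).1.trans (hu 0).2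
  have hνΔt : |ν * Δt| ≤ |ν| * Δt := by rw [abs_mul, abs_of_nonneg hΔt]
  have hn0 : (0 : ℝ) ≤ n := n.cast_nonneg
  unfold callNumber
  split_ifs with hn
  · rw [abs_le] at hνΔt ⊢
    constructor <;> nlinarith [abs_nonneg ν]
  · have hne := Finset.nonempty_Icc.mpr (Nat.one_le_iff_ne_zero.mpr hn)
    have hsum_le : ∑ i ∈ Finset.Icc 1 n, u i ≤ n * Δt := by
      simpa using Finset.sum_le_sum fun i (_ : i ∈ Finset.Icc 1 n) => (hu i).2
    have hsum_nonneg : 0 ≤ ∑ i ∈ Finset.Icc 1 n, u i := Finset.sum_nonneg fun i _ => (hu i).1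
    have hsup_le : (Finset.Icc 1 n).sup' hne u ≤ Δt := Finset.sup'_le _ _ fun i _ => (hu i).2
    have hsup_nonneg : 0 ≤ (Finset.Icc 1 n).sup' hne u :=
      Finset.le_sup'_of_le _ (Finset.mem_Icc.2 ⟨le_rfl, Nat.one_le_iff_ne_zero.mpr hn⟩) (hu 1).1
    have hνR : |ν * (n * Δt - ∑ i ∈ Finset.Icc 1 n, u i + (Finset.Icc 1 n).sup' hne u)|
        ≤ |ν| * ((n + 1) * Δt) := by
      rw [abs_mul]
      gcongr
      exact abs_le.2 ⟨by nlinarith, by linarith⟩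
    rw [abs_le] at hνΔt hνR ⊢
    constructor <;> linarith

lemma hasSum_poissonMeasure_mul_expectedCallNumber {r : ℝ≥0} (hr : r ≠ 0) :
    HasSum (fun n : ℕ => Real.exp (-r) * r ^ n / n.factorial * expectedCallNumber ν Δt n)
      ((1 + 2 * (ν * Δt)) + (2 + ν * Δt / 2) * r - ν * Δt * ((1 - Real.exp (-r)) / r)) := by
  -- `n / (n + 1) = 1 - 1 / (n + 1)` splits the summand into the three Poisson series.
  have h := (((hasSum_one_poissonMeasure r).mul_left (1 + 2 * (ν * Δt))).add
    ((hasSum_mul_cast_poissonMeasure r).mul_left (2 + ν * Δt / 2))).sub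
    ((hasSum_div_succ_poissonMeasure r hr).mul_left (ν * Δt))
  rw [mul_one] at h
  refine (congrArg (HasSum · _) (funext fun n => ?_)).mpr h
  simp only [expectedCallNumber]
  field_simp
  ring

variable {Ω : Type*} [MeasurableSpace Ω] {P : Measure Ω} [IsProbabilityMeasure P]
  {U : ℕ → Ω → ℝ}

lemma integral_callNumber (hΔt : 0 < Δt) (hU : ∀ i, IsUniform (U i) (Set.Icc 0 Δt) P)
    (hind : iIndepFun U P) (n : ℕ) :
    ∫ ω, callNumber ν Δt n (fun i => U i ω) ∂P = expectedCallNumber ν Δt n := by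
  by_cases hn : n = 0
  · simp [callNumber, expectedCallNumber, hn]
  have hne := Finset.nonempty_Icc.mpr (Nat.one_le_iff_ne_zero.mpr hn)
  have hUint : ∀ i, Integrable (U i) P := fun i => (hU i).integrable_Icc hΔt
  have hSint := integrable_finsetSum (Finset.Icc 1 n) fun i _ => hUint i
  have hMint := Finset.integrable_sup'_apply hne fun i _ => hUint i
  have hS : ∫ ω, ∑ i ∈ Finset.Icc 1 n, U i ω ∂P = n * (Δt / 2) := by
    simp [integral_finsetSum _ fun i _ => hUint i, fun i => (hU i).integral_eq_half hΔt]
  have hM : ∫ ω, (Finset.Icc 1 n).sup' hne (U · ω) ∂P = Δt * n / (n + 1) := by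
    simpa using integral_sup'_of_isUniform hΔt hU hind hne
  calc ∫ ω, callNumber ν Δt n (fun i => U i ω) ∂P
      = ∫ ω, (1 + ν * Δt + 2 * n + ν * (n * Δt)) + ν * (Finset.Icc 1 n).sup' hne (U · ω)
          - ν * ∑ i ∈ Finset.Icc 1 n, U i ω ∂P := by
        simp only [callNumber, dif_neg hn]
        congr 1 with ω
        ring
    _ = _ := by
        rw [integral_sub ?_ (hSint.const_mul ν), integral_add (integrable_const _)
          (hMint.const_mul ν), integral_const, integral_const_mul, integral_const_mul, hS, hM]
        · simp only [probReal_univ, one_smul, expectedCallNumber]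
          ring
        · exact (integrable_const _).add (hMint.const_mul ν)

lemma integrable_callNumber_comp (hΔt : 0 < Δt) {N : Ω → ℕ} (hNm : AEMeasurable N P)
    (hN : Integrable (fun ω => (N ω : ℝ)) P) (hU : ∀ i, IsUniform (U i) (Set.Icc 0 Δt) P) :
    Integrable (fun ω => callNumber ν Δt (N ω) (fun i => U i ω)) P := by
  have hV : AEMeasurable (fun ω i => U i ω) P :=
    aemeasurable_pi_lambda _ fun i => (hU i).aemeasurable_Icc hΔt
  have hF : Measurable (Function.uncurry (callNumber ν Δt)) :=
    measurable_from_prod_countable_right (measurable_callNumber ν Δt)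
  refine Integrable.mono' ((integrable_const (1 + 2 * |ν| * Δt)).add
    (hN.const_mul (2 + |ν| * Δt)))
    (hF.comp_aemeasurable (hNm.prodMk hV)).aestronglyMeasurable ?_
  filter_upwards [ae_all_iff.2 fun i => (hU i).ae_mem_Icc hΔt] with ω hω
  exact (Real.norm_eq_abs _).trans_le (abs_callNumber_le hω)

end CallNumber

theorem stmt_0_general (lam ν Δt : ℝ) (hlam : 0 < lam) (hΔt : 0 < Δt)
    {Ω : Type*} [MeasurableSpace Ω] (P : Measure Ω) [IsProbabilityMeasure P]
    (N : Ω → ℕ) (hN : Measure.map N P = ProbabilityTheory.poissonMeasure ((lam * Δt).toNNReal))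
    (U : ℕ → Ω → ℝ)
    (hunif : ∀ i, MeasureTheory.pdf.IsUniform (U i) (Set.Icc (0:ℝ) Δt) P volume)
    (hiid : ProbabilityTheory.iIndepFun U P)
    (hindep : ProbabilityTheory.IndepFun N (fun ω => fun i => U i ω) P)
    (C : Ω → ℝ)
    (hC : C = fun ω =>
      if hω : N ω = 0 then 1 + ν * Δt
      else 1 + ν * Δt + 2 * (N ω : ℝ)
        + ν * ((N ω : ℝ) * Δt - (∑ i ∈ Finset.Icc 1 (N ω), U i ω)
            + (Finset.Icc 1 (N ω)).sup'
                (Finset.nonempty_Icc.mpr (Nat.one_le_iff_ne_zero.mpr hω))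
                (fun i => U i ω))) :
    ∫ ω, C ω ∂P
      = 1 + ν * Δt + (2 * lam + ν) * Δt + (lam * ν / 2) * Δt ^ 2
        + (ν / lam) * (Real.exp (-(lam * Δt)) - 1) := by
  set r := (lam * Δt).toNNReal
  have hr : (r : ℝ) = lam * Δt := Real.coe_toNNReal _ (by positivity)
  have hr0 : r ≠ 0 := by rw [← NNReal.coe_ne_zero, hr]; positivity
  have hNm : AEMeasurable N P := .of_map_ne_zero (hN ▸ IsProbabilityMeasure.ne_zero _)
  have hV : AEMeasurable (fun ω i => U i ω) P :=
    aemeasurable_pi_lambda _ fun i => (hunif i).aemeasurable_Icc hΔt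
  rw [show C = fun ω => callNumber ν Δt (N ω) (fun i => U i ω) from hC,
    hindep.integral_comp_eq_integral_integral hNm hV (measurable_callNumber ν Δt)
      (integrable_callNumber_comp hΔt hNm
        (integrable_natCast_of_map_eq_poissonMeasure hN) hunif), hN, integral_poissonMeasure]
  simp only [integral_callNumber hΔt hunif hiid, smul_eq_mul]
  rw [(hasSum_poissonMeasure_mul_expectedCallNumber hr0).tsum_eq, hr]
  field_simp
  ring

/-- Theorem 1 of the paper (exact form): on a probability space, let `N` be
Poisson with parameter `λΔt` and `(U_i)_{i≥1}` i.i.d. uniform on `[0, Δt]`,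
independent of `N`.  With
`C = 1 + νΔt` on `{N = 0}` and
`C = 1 + νΔt + 2N + ν(NΔt − Σ_{i=1}^N U_i + max_{1≤i≤N} U_i)` on `{N ≥ 1}`,
one has
`E[C] = 1 + νΔt + (2λ + ν)Δt + (λν/2)Δt² + (ν/λ)(e^{−λΔt} − 1)` —
the expected call number of the standard RK4 scheme for one neuron over one
time step in the regular method. -/
theorem stmt_0 (lam ν Δt : ℝ) (hlam : 0 < lam) (hν : 0 < ν) (hΔt : 0 < Δt)
    {Ω : Type*} [MeasurableSpace Ω] (P : Measure Ω) [IsProbabilityMeasure P]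
    (N : Ω → ℕ) (hN : Measure.map N P = ProbabilityTheory.poissonMeasure ((lam * Δt).toNNReal))
    (U : ℕ → Ω → ℝ)
    (hunif : ∀ i, MeasureTheory.pdf.IsUniform (U i) (Set.Icc (0:ℝ) Δt) P volume)
    (hiid : ProbabilityTheory.iIndepFun U P)
    (hindep : ProbabilityTheory.IndepFun N (fun ω => fun i => U i ω) P)
    (C : Ω → ℝ)
    (hC : C = fun ω =>
      if hω : N ω = 0 then 1 + ν * Δt
      else 1 + ν * Δt + 2 * (N ω : ℝ)
        + ν * ((N ω : ℝ) * Δt - (∑ i ∈ Finset.Icc 1 (N ω), U i ω)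
            + (Finset.Icc 1 (N ω)).sup'
                (Finset.nonempty_Icc.mpr (Nat.one_le_iff_ne_zero.mpr hω))
                (fun i => U i ω))) :
    ∫ ω, C ω ∂P
      = 1 + ν * Δt + (2 * lam + ν) * Δt + (lam * ν / 2) * Δt ^ 2
        + (ν / lam) * (Real.exp (-(lam * Δt)) - 1) :=
  stmt_0_general lam ν Δt hlam hΔt P N hN U hunif hiid hindep C hC
end

section
/- Let λ > 0, ν > 0 and Δt > 0. Then the series Σ_{n=1}^{∞} (2n + νΔt + νΔt·(n−1)(n+2)/(2(n+1))) · ((λΔt)^n / n!) · e^{−λΔt} converges and equals (2λ + ν)Δt + (λν/2)Δt² + (ν/λ)(e^{−λΔt} − 1). -/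
/-!
Write `x = λΔt` and `c = νΔt`. Since `(n - 1)(n + 2) / (2(n + 1)) = n / 2 - 1 / (n + 1)`, the
coefficient of the `n`-th Poisson weight is `(2 + c/2) n + c - c / (n + 1)`, and the series splits
into three pieces of the exponential series: `Σ n xⁿ/n! = x eˣ`, `Σ_{n ≥ 1} xⁿ/n! = eˣ - 1` and
`Σ_{n ≥ 1} xⁿ/(n + 1)! = (eˣ - 1 - x)/x`. Multiplying by `e⁻ˣ` gives the closed form.
-/

open Real Nat

lemma Real.hasSum_pow_div_factorial (x : ℝ) : HasSum (fun n : ℕ => x ^ n / n !) (exp x) := by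
  rw [exp_eq_exp_ℝ]
  exact NormedSpace.expSeries_div_hasSum_exp x

lemma Real.hasSum_pow_succ_div_factorial_succ (x : ℝ) :
    HasSum (fun m : ℕ => x ^ (m + 1) / (m + 1)!) (exp x - 1) := by
  simpa using (hasSum_nat_add_iff' 1).mpr (hasSum_pow_div_factorial x)

lemma Real.hasSum_natCast_mul_pow_succ_div_factorial_succ (x : ℝ) :
    HasSum (fun m : ℕ => ((m + 1 : ℕ) : ℝ) * (x ^ (m + 1) / (m + 1)!)) (x * exp x) := by
  refine ((hasSum_pow_div_factorial x).mul_left x).congr_fun fun m => ?_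
  rw [factorial_succ, cast_mul, pow_succ]
  field_simp

lemma Real.hasSum_inv_succ_mul_pow_succ_div_factorial_succ {x : ℝ} (hx : x ≠ 0) :
    HasSum (fun m : ℕ => (((m + 1 : ℕ) : ℝ) + 1)⁻¹ * (x ^ (m + 1) / (m + 1)!))
      ((exp x - 1 - x) / x) := by
  have htail : HasSum (fun m : ℕ => x ^ (m + 2) / (m + 2)!) (exp x - 1 - x) := by
    simpa [Finset.sum_range_succ, sub_sub] using
      (hasSum_nat_add_iff' 2).mpr (hasSum_pow_div_factorial x)
  refine (htail.div_const x).congr_fun fun m => ?_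
  rw [factorial_succ (m + 1), pow_succ]
  push_cast
  field_simp
  ring

lemma mul_sub_one_mul_add_two_div_eq {n : ℝ} (hn : n + 1 ≠ 0) :
    (n - 1) * (n + 2) / (2 * (n + 1)) = n / 2 - (n + 1)⁻¹ := by
  field_simp
  ring

theorem stmt_2_general (lam ν Δt : ℝ) (hlam : 0 < lam) (hΔt : 0 < Δt) :
    HasSum
      (fun m : ℕ =>
        (2 * ((m + 1 : ℕ) : ℝ) + ν * Δt
            + ν * Δt * ((((m + 1 : ℕ) : ℝ) - 1) * (((m + 1 : ℕ) : ℝ) + 2)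
                / (2 * (((m + 1 : ℕ) : ℝ) + 1))))
          * ((lam * Δt) ^ (m + 1) / ((m + 1).factorial : ℝ))
          * Real.exp (-(lam * Δt)))
      ((2 * lam + ν) * Δt + (lam * ν / 2) * Δt ^ 2
        + (ν / lam) * (Real.exp (-(lam * Δt)) - 1)) := by
  have hx : lam * Δt ≠ 0 := by positivity
  have hsum := (((hasSum_natCast_mul_pow_succ_div_factorial_succ (lam * Δt)).mul_left
      (2 + ν * Δt / 2)).add ((hasSum_pow_succ_div_factorial_succ (lam * Δt)).mul_left (ν * Δt))).sub
    ((hasSum_inv_succ_mul_pow_succ_div_factorial_succ hx).mul_left (ν * Δt))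
  have hvalue : ((2 + ν * Δt / 2) * (lam * Δt * exp (lam * Δt)) + ν * Δt * (exp (lam * Δt) - 1)
      - ν * Δt * ((exp (lam * Δt) - 1 - lam * Δt) / (lam * Δt))) * exp (-(lam * Δt))
      = (2 * lam + ν) * Δt + (lam * ν / 2) * Δt ^ 2 + (ν / lam) * (exp (-(lam * Δt)) - 1) := by
    rw [exp_neg]
    field_simp
    ring
  rw [← hvalue]
  refine (hsum.mul_right (exp (-(lam * Δt)))).congr_fun fun m => ?_
  rw [mul_sub_one_mul_add_two_div_eq (by positivity)]
  ring

/-- Poisson-weighted series computation in the proof of Theorem 1: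
`Σ_{n=1}^∞ (2n + νΔt + νΔt·(n−1)(n+2)/(2(n+1))) ((λΔt)^n/n!) e^{−λΔt}
  = (2λ + ν)Δt + (λν/2)Δt² + (ν/λ)(e^{−λΔt} − 1)`.
The sum over `n ≥ 1` is encoded by summing the term at `n+1` over `n : ℕ`;
`HasSum` expresses both convergence and the value of the series. -/
theorem stmt_2 (lam ν Δt : ℝ) (hlam : 0 < lam) (hν : 0 < ν) (hΔt : 0 < Δt) :
    HasSum
      (fun m : ℕ =>
        (2 * ((m + 1 : ℕ) : ℝ) + ν * Δt
            + ν * Δt * ((((m + 1 : ℕ) : ℝ) - 1) * (((m + 1 : ℕ) : ℝ) + 2)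
                / (2 * (((m + 1 : ℕ) : ℝ) + 1))))
          * ((lam * Δt) ^ (m + 1) / ((m + 1).factorial : ℝ))
          * Real.exp (-(lam * Δt)))
      ((2 * lam + ν) * Δt + (lam * ν / 2) * Δt ^ 2
        + (ν / lam) * (Real.exp (-(lam * Δt)) - 1)) :=
  stmt_2_general lam ν Δt hlam hΔt
end
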